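/- For all real z₁, z₂, the average derivative of the sigmoid along the segment satisfies ∫₀¹ μ'(z₁ + v(z₂-z₁)) dv ≥ μ'(z₁)·(1 + |z₁ - z₂|)^{-1}. -/

import Mathlib

noncomputable def sigmoid (x : ℝ) : ℝ := (1 + Real.exp (-x))⁻¹

/-!
Writing μ' = μ · μ(-·), a shift by t ≥ 0 can only increase one factor and decreases the other by
at most the factor e^{-t}; as μ' is even this gives μ'(x + t) ≥ e^{-|t|} μ'(x) for all t. Hence the
average of μ' over the segment is at least μ'(z₁) ∫₀¹ e^{-v a} dv = μ'(z₁) (1 - e^{-a}) / a with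
a = |z₂ - z₁|, and (1 - e^{-a}) / a ≥ (1 + a)⁻¹ is equivalent to 1 + a ≤ e^a.
-/

open Set intervalIntegral

theorem sigmoid_eq_real_sigmoid : sigmoid = Real.sigmoid := rfl

theorem deriv_sigmoid_eq_mul_sigmoid_neg (x : ℝ) :
    deriv sigmoid x = sigmoid x * sigmoid (-x) := by
  rw [sigmoid_eq_real_sigmoid, Real.deriv_sigmoid, Real.sigmoid_neg]

theorem continuous_deriv_sigmoid : Continuous (deriv sigmoid) := by
  rw [sigmoid_eq_real_sigmoid, Real.deriv_sigmoid]
  fun_prop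

theorem deriv_sigmoid_neg (x : ℝ) : deriv sigmoid (-x) = deriv sigmoid x := by
  rw [deriv_sigmoid_eq_mul_sigmoid_neg, deriv_sigmoid_eq_mul_sigmoid_neg, neg_neg, mul_comm]

theorem exp_neg_mul_sigmoid_le_sigmoid_sub {t : ℝ} (ht : 0 ≤ t) (y : ℝ) :
    Real.exp (-t) * sigmoid y ≤ sigmoid (y - t) := by
  have hexp : Real.exp (-t) ≤ 1 := Real.exp_le_one_iff.mpr (neg_nonpos.mpr ht)
  unfold sigmoid
  rw [← div_eq_mul_inv, div_le_iff₀ (by positivity), inv_mul_eq_div,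
    le_div_iff₀ (by positivity), mul_add, mul_one, ← Real.exp_add]
  rw [show -t + -(y - t) = -y by ring]
  linarith

theorem exp_neg_mul_deriv_sigmoid_le_of_nonneg {t : ℝ} (ht : 0 ≤ t) (x : ℝ) :
    Real.exp (-t) * deriv sigmoid x ≤ deriv sigmoid (x + t) := by
  rw [deriv_sigmoid_eq_mul_sigmoid_neg, deriv_sigmoid_eq_mul_sigmoid_neg, mul_left_comm,
    neg_add, ← sub_eq_add_neg]
  exact mul_le_mul (Real.sigmoid_monotone (le_add_of_nonneg_right ht))
    (exp_neg_mul_sigmoid_le_sigmoid_sub ht (-x))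
    (mul_nonneg (Real.exp_pos _).le (Real.sigmoid_nonneg _)) (Real.sigmoid_nonneg _)

theorem exp_neg_abs_mul_deriv_sigmoid_le (x t : ℝ) :
    Real.exp (-|t|) * deriv sigmoid x ≤ deriv sigmoid (x + t) := by
  rcases le_total 0 t with ht | ht
  · rw [abs_of_nonneg ht]
    exact exp_neg_mul_deriv_sigmoid_le_of_nonneg ht x
  · rw [abs_of_nonpos ht, ← deriv_sigmoid_neg x, ← deriv_sigmoid_neg (x + t), neg_add]
    exact exp_neg_mul_deriv_sigmoid_le_of_nonneg (neg_nonneg.mpr ht) (-x)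

theorem integral_exp_neg_mul {a : ℝ} (ha : a ≠ 0) :
    ∫ v in (0 : ℝ)..1, Real.exp (-(v * a)) = a⁻¹ * (1 - Real.exp (-a)) := by
  rw [intervalIntegral.integral_comp_mul_right (fun y => Real.exp (-y)) ha]
  simp [intervalIntegral.integral_comp_neg]

theorem inv_one_add_le_integral_exp_neg_mul {a : ℝ} (ha : 0 ≤ a) :
    (1 + a)⁻¹ ≤ ∫ v in (0 : ℝ)..1, Real.exp (-(v * a)) := by
  rcases ha.eq_or_lt with rfl | ha
  · simp
  rw [integral_exp_neg_mul ha.ne', inv_mul_eq_div, le_div_iff₀ ha, inv_mul_eq_div,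
    div_le_iff₀ (by positivity)]
  have : (1 + a) * Real.exp (-a) ≤ 1 := by
    rw [Real.exp_neg, ← div_eq_mul_inv, div_le_one (Real.exp_pos a)]
    linarith [Real.add_one_le_exp a]
  nlinarith

theorem sigmoid_avg_deriv_lower (z₁ z₂ : ℝ) :
    deriv sigmoid z₁ * (1 + |z₁ - z₂|)⁻¹ ≤
      ∫ v in (0:ℝ)..1, deriv sigmoid (z₁ + v * (z₂ - z₁)) := by
  set a := |z₂ - z₁|
  have hpointwise : ∀ v ∈ Icc (0 : ℝ) 1,
      Real.exp (-(v * a)) * deriv sigmoid z₁ ≤ deriv sigmoid (z₁ + v * (z₂ - z₁)) := by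
    intro v hv
    have habs : |v * (z₂ - z₁)| = v * a := by rw [abs_mul, abs_of_nonneg hv.1]
    simpa only [habs] using exp_neg_abs_mul_deriv_sigmoid_le z₁ (v * (z₂ - z₁))
  have hderiv_nonneg : 0 ≤ deriv sigmoid z₁ := by
    rw [deriv_sigmoid_eq_mul_sigmoid_neg]
    exact mul_nonneg (Real.sigmoid_nonneg _) (Real.sigmoid_nonneg _)
  calc deriv sigmoid z₁ * (1 + |z₁ - z₂|)⁻¹
      ≤ (∫ v in (0 : ℝ)..1, Real.exp (-(v * a))) * deriv sigmoid z₁ := by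
        rw [abs_sub_comm, mul_comm]
        exact mul_le_mul_of_nonneg_right (inv_one_add_le_integral_exp_neg_mul (abs_nonneg _))
          hderiv_nonneg
    _ = ∫ v in (0 : ℝ)..1, Real.exp (-(v * a)) * deriv sigmoid z₁ :=
        (integral_mul_const _ _).symm
    _ ≤ ∫ v in (0 : ℝ)..1, deriv sigmoid (z₁ + v * (z₂ - z₁)) :=
        integral_mono_on zero_le_one (Continuous.intervalIntegrable (by fun_prop) _ _)
          ((continuous_deriv_sigmoid.comp (by fun_prop)).intervalIntegrable _ _) hpointwise
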